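/- If λ_k = -d/c is a multiple eigenvalue with associated function y_{k+1}, and y_n an eigenfunction for real λ_n ≠ λ_k with cλ_n+d ≠ 0 and aλ_k+b ≠ 0, then ∫₀¹ y_{k+1} y_n dx = -(ad-bc)·( y_{k+1}'(1)/(aλ_k+b) - a·y_k'(1)/(aλ_k+b)² ) · y_n(1)/(cλ_n+d). -/

import Mathlib

open MeasureTheory Set

private lemma wronskian_zero (β p p' r r' : ℝ)
    (h1 : p * Real.cos β = p' * Real.sin β)
    (h2 : r * Real.cos β = r' * Real.sin β) :
    p' * r - p * r' = 0 := by
  have hs : (p' * r - p * r') * Real.sin β = 0 := by linear_combination p * h2 - r * h1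
  have hc : (p' * r - p * r') * Real.cos β = 0 := by linear_combination p' * h2 - r' * h1
  linear_combination Real.sin β * hs + Real.cos β * hc
    - (p' * r - p * r') * Real.sin_sq_add_cos_sq β

/-- Lemma 3.1(a): inner product of the first associated function with an eigenfunction
for a different eigenvalue, case `λk = -d/c ≠ λn`. -/
theorem assoc_inner_product_critical
    (a b c d β : ℝ) (habcd : a * d - b * c < 0) (hac : a * c ≠ 0)
    (hβ0 : 0 ≤ β) (hβπ : β < Real.pi)
    (q : ℝ → ℝ) (hq : ContinuousOn q (Icc (0:ℝ) 1))
    (lam lamn : ℝ) (hcd : c * lam + d = 0) (hab : a * lam + b ≠ 0) (hcdn : c * lamn + d ≠ 0) (hne : lamn ≠ lam)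
    (y0 y0' y0'' y1 y1' y1'' : ℝ → ℝ)
    (hy0 : ∀ x ∈ Icc (0:ℝ) 1, HasDerivAt y0 (y0' x) x)
    (hy0' : ∀ x ∈ Icc (0:ℝ) 1, HasDerivAt y0' (y0'' x) x)
    (hy0'' : ContinuousOn y0'' (Icc (0:ℝ) 1))
    (hy1 : ∀ x ∈ Icc (0:ℝ) 1, HasDerivAt y1 (y1' x) x)
    (hy1' : ∀ x ∈ Icc (0:ℝ) 1, HasDerivAt y1' (y1'' x) x)
    (hy1'' : ContinuousOn y1'' (Icc (0:ℝ) 1))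
    (hode0 : ∀ x ∈ Icc (0:ℝ) 1, -y0'' x + q x * y0 x = lam * y0 x)
    (hode1 : ∀ x ∈ Icc (0:ℝ) 1, -y1'' x + q x * y1 x = lam * y1 x + y0 x)
    (hbc00 : y0 0 * Real.cos β = y0' 0 * Real.sin β)
    (hbc01 : y1 0 * Real.cos β = y1' 0 * Real.sin β)
    (hbc10 : (a * lam + b) * y0 1 = (c * lam + d) * y0' 1)
    (hbc11 : (a * lam + b) * y1 1 + a * y0 1 = (c * lam + d) * y1' 1 + c * y0' 1)
    (yn yn' yn'' : ℝ → ℝ)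
    (hyn : ∀ x ∈ Icc (0:ℝ) 1, HasDerivAt yn (yn' x) x)
    (hyn' : ∀ x ∈ Icc (0:ℝ) 1, HasDerivAt yn' (yn'' x) x)
    (hyn'' : ContinuousOn yn'' (Icc (0:ℝ) 1))
    (hoden : ∀ x ∈ Icc (0:ℝ) 1, -yn'' x + q x * yn x = lamn * yn x)
    (hbc0n : yn 0 * Real.cos β = yn' 0 * Real.sin β)
    (hbc1n : (a * lamn + b) * yn 1 = (c * lamn + d) * yn' 1)
    :
    ∫ x in (0:ℝ)..1, y1 x * yn x
      = -(a * d - b * c) * (y1' 1 / (a * lam + b) - a * y0' 1 / (a * lam + b) ^ 2)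
          * (yn 1 / (c * lamn + d)) := by
  have hc0 : c ≠ 0 := fun h => hac (by rw [h, mul_zero])
  have hne' : lamn - lam ≠ 0 := sub_ne_zero.mpr hne
  have huIcc : uIcc (0:ℝ) 1 = Icc (0:ℝ) 1 := uIcc_of_le zero_le_one
  -- continuity
  have cy0 : ContinuousOn y0 (Icc (0:ℝ) 1) := fun x hx => (hy0 x hx).continuousAt.continuousWithinAt
  have cy1 : ContinuousOn y1 (Icc (0:ℝ) 1) := fun x hx => (hy1 x hx).continuousAt.continuousWithinAt
  have cyn : ContinuousOn yn (Icc (0:ℝ) 1) := fun x hx => (hyn x hx).continuousAt.continuousWithinAt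
  -- integrability
  have hI0 : IntervalIntegrable (fun x => y0 x * yn x) volume 0 1 := by
    apply ContinuousOn.intervalIntegrable; rw [huIcc]; exact cy0.mul cyn
  have hI1 : IntervalIntegrable (fun x => y1 x * yn x) volume 0 1 := by
    apply ContinuousOn.intervalIntegrable; rw [huIcc]; exact cy1.mul cyn
  -- FTC for the Wronskian of y0 and yn
  have ftc0 : ∫ x in (0:ℝ)..1, (lamn - lam) * (y0 x * yn x)
      = (y0' 1 * yn 1 - y0 1 * yn' 1) - (y0' 0 * yn 0 - y0 0 * yn' 0) := by
    apply intervalIntegral.integral_eq_sub_of_hasDerivAt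
      (f := fun x => y0' x * yn x - y0 x * yn' x)
    · intro x hx
      rw [huIcc] at hx
      have h := ((hy0' x hx).mul (hyn x hx)).sub ((hy0 x hx).mul (hyn' x hx))
      convert h using 1
      case e'_8 => rfl
      have h0 := hode0 x hx
      have hn := hoden x hx
      linear_combination (yn x) * h0 - (y0 x) * hn
    · apply (hI0.const_mul (lamn - lam))
  -- FTC for the Wronskian of y1 and yn
  have ftc1 : ∫ x in (0:ℝ)..1, ((lamn - lam) * (y1 x * yn x) - y0 x * yn x)
      = (y1' 1 * yn 1 - y1 1 * yn' 1) - (y1' 0 * yn 0 - y1 0 * yn' 0) := by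
    apply intervalIntegral.integral_eq_sub_of_hasDerivAt
      (f := fun x => y1' x * yn x - y1 x * yn' x)
    · intro x hx
      rw [huIcc] at hx
      have h := ((hy1' x hx).mul (hyn x hx)).sub ((hy1 x hx).mul (hyn' x hx))
      convert h using 1
      case e'_8 => rfl
      have h1 := hode1 x hx
      have hn := hoden x hx
      linear_combination (yn x) * h1 - (y1 x) * hn
    · exact (hI1.const_mul (lamn - lam)).sub hI0
  -- boundary terms at 0 vanish
  have w0 : y0' 0 * yn 0 - y0 0 * yn' 0 = 0 := by
    have := wronskian_zero β (yn 0) (yn' 0) (y0 0) (y0' 0) hbc0n hbc00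
    linarith
  have w1 : y1' 0 * yn 0 - y1 0 * yn' 0 = 0 := by
    have := wronskian_zero β (yn 0) (yn' 0) (y1 0) (y1' 0) hbc0n hbc01
    linarith
  -- value at 1
  have hy01 : y0 1 = 0 := by
    rw [hcd, zero_mul] at hbc10
    exact (mul_eq_zero.mp hbc10).resolve_left hab
  have hy11 : (a * lam + b) * y1 1 = c * y0' 1 := by
    rw [hcd, zero_mul, hy01, mul_zero, add_zero, zero_add] at hbc11
    exact hbc11
  -- rewrite integrals
  rw [intervalIntegral.integral_const_mul] at ftc0
  rw [intervalIntegral.integral_sub (hI1.const_mul _) hI0,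
      intervalIntegral.integral_const_mul] at ftc1
  set E0 := ∫ x in (0:ℝ)..1, y0 x * yn x with hE0
  set E1 := ∫ x in (0:ℝ)..1, y1 x * yn x with hE1
  rw [w0, hy01] at ftc0
  rw [w1] at ftc1
  -- solve the algebra
  have hd : d = -(c * lam) := by linarith
  subst hd
  have hy1v : y1 1 = c * y0' 1 / (a * lam + b) := by
    rw [eq_div_iff hab]; linear_combination hy11
  have hynv : yn' 1 = (a * lamn + b) * yn 1 / (c * lamn + -(c * lam)) := by
    rw [eq_div_iff hcdn]; linear_combination -hbc1n
  have hE0v : E0 = y0' 1 * yn 1 / (lamn - lam) := by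
    rw [eq_div_iff hne']; linear_combination ftc0
  have hE1v : E1 = (y1' 1 * yn 1 - y1 1 * yn' 1 + E0) / (lamn - lam) := by
    rw [eq_div_iff hne']; linear_combination ftc1
  rw [hE1v, hy1v, hynv, hE0v]
  rw [show c * lamn + -(c * lam) = c * (lamn - lam) by ring]
  field_simp
  ring
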